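/- The column-insertion shape datum for binary matrices is a bijection. Let μ, ν be partitions such that there exists at least one partition λ₀ with λ₀ ≤ᵥ μ and λ₀ ≤ₕ ν. Let t₁ be the element of T(μ,ν) with minimal second coordinate, and let ψ : S(μ,ν) → T(μ,ν) send each s = (i,j) to the element of T(μ,ν) with minimal second coordinate among those whose second coordinate exceeds j. Then for every partition λ with λ ≤ᵥ μ and λ ≤ₕ ν and every b ∈ {0,1}, the set cells(μ) ∪ cells(ν) ∪ {ψ(s) : s ∈ S(μ,ν) \ cells(λ)} ∪ (if b = 1 then {t₁} else ∅) is the cell set of a (unique) partition κ, which satisfies μ ≤ₕ κ and ν ≤ᵥ κ; and the resulting map (λ, b) ↦ κ is a bijection from {(λ, b) : λ a partition with λ ≤ᵥ μ and λ ≤ₕ ν, b ∈ {0,1}} onto {κ : κ a partition with μ ≤ₕ κ and ν ≤ᵥ κ}. -/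
import Mathlib


/-- A partition: weakly decreasing function `ℕ → ℕ` that is eventually zero. -/
def IsPartition (f : ℕ → ℕ) : Prop :=
  (∀ i, f (i + 1) ≤ f i) ∧ ∃ N, ∀ i, N ≤ i → f i = 0

/-- The size `|f|` of an eventually-zero function, as a finite sum. -/
noncomputable def psize (f : ℕ → ℕ) : ℕ := ∑ᶠ i, f i

/-- `HStrip a b` means `b/a` is a horizontal strip (written `a ≤ₕ b`). -/
def HStrip (a b : ℕ → ℕ) : Prop := ∀ i, a i ≤ b i ∧ b (i + 1) ≤ a i

/-- `VStrip a b` means `b/a` is a vertical strip (written `a ≤ᵥ b`). -/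
def VStrip (a b : ℕ → ℕ) : Prop := ∀ i, a i ≤ b i ∧ b i ≤ a i + 1

/-- The Young diagram (cell set) of a partition. -/
def cells (f : ℕ → ℕ) : Set (ℕ × ℕ) := {p | p.2 < f p.1}

/-- The transpose partition. -/
noncomputable def ptranspose (f : ℕ → ℕ) : ℕ → ℕ := fun j => {i : ℕ | j < f i}.ncard

/-- The set `S(μ,ν)` of optional squares for the intermediate shape. -/
def Sset (mu nu : ℕ → ℕ) : Set (ℕ × ℕ) :=
  {p | mu p.1 = p.2 + 1 ∧ ptranspose nu p.2 = p.1 + 1}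

/-- The set `T(μ,ν)` of optional squares for the resulting shape. -/
def Tset (mu nu : ℕ → ℕ) : Set (ℕ × ℕ) :=
  {p | ptranspose mu p.2 = p.1 ∧ nu p.1 = p.2}

/-- The Burge relations for `(λ, μ, ν, m)` satisfied by a pair `(κ, c)`,
with the convention `c (-1) = 0`. -/
def BurgeRel (lam mu nu : ℕ → ℕ) (m : ℕ) (kap c : ℕ → ℕ) : Prop :=
  (c 0 + mu 0 + nu 0 = lam 0 + kap 0) ∧
  (∀ i, c (i + 1) + mu (i + 1) + nu (i + 1) = lam (i + 1) + kap (i + 1) + c i) ∧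
  (∀ i, kap (i + 1) ≤ lam i) ∧
  (∀ i, 0 < c i → kap (i + 1) = lam i) ∧
  (∃ N, ∀ i, N ≤ i → c i = m)

lemma aux_anti {f : ℕ → ℕ} (hf : IsPartition f) : Antitone f :=
  antitone_nat_of_succ_le hf.1

lemma aux_cells_inj {f g : ℕ → ℕ} (h : cells f = cells g) : f = g := by
  funext i
  rcases lt_trichotomy (f i) (g i) with hlt | he | hlt
  · have h2 : (i, f i) ∈ cells g := hlt
    rw [← h] at h2
    exact absurd h2 (by simp [cells])
  · exact he
  · have h2 : (i, g i) ∈ cells f := hlt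
    rw [h] at h2
    exact absurd h2 (by simp [cells])

lemma aux_tr_eq {f : ℕ → ℕ} (hf : IsPartition f) (j i : ℕ) :
    ptranspose f j = i ↔ f i ≤ j ∧ ∀ k < i, j < f k := by
  obtain ⟨N, hN⟩ := hf.2
  have hex : ∃ m, f m ≤ j := ⟨N, by simp [hN N le_rfl]⟩
  have key : ∀ m, j < f m ↔ m < Nat.find hex := by
    intro m
    constructor
    · intro hm
      by_contra hge
      push_neg at hge
      have := le_trans (aux_anti hf hge) (Nat.find_spec hex)
      omega
    · intro hm
      have := Nat.find_min hex hm
      omega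
  have hset : {m : ℕ | j < f m} = ↑(Finset.range (Nat.find hex)) := by
    ext m
    simpa [Finset.mem_coe, Finset.mem_range] using key m
  have hval : ptranspose f j = Nat.find hex := by
    rw [ptranspose]
    rw [hset, Set.ncard_coe_finset, Finset.card_range]
  rw [hval]
  constructor
  · rintro rfl
    exact ⟨Nat.find_spec hex, fun k hk => by
      have := Nat.find_min hex hk; omega⟩
  · rintro ⟨h1, h2⟩
    refine le_antisymm (Nat.find_le h1) ?_
    by_contra hlt
    push_neg at hlt
    have := h2 _ hlt
    have := Nat.find_spec hex
    omega

lemma aux_mem_S {mu nu : ℕ → ℕ} (hnu : IsPartition nu) {i j : ℕ} :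
    (i, j) ∈ Sset mu nu ↔ mu i = j + 1 ∧ nu (i + 1) ≤ j ∧ j < nu i := by
  show mu i = j + 1 ∧ ptranspose nu j = i + 1 ↔ _
  rw [aux_tr_eq hnu]
  constructor
  · rintro ⟨h1, h2, h3⟩
    exact ⟨h1, h2, h3 i (by omega)⟩
  · rintro ⟨h1, h2, h3⟩
    exact ⟨h1, h2, fun k hk => lt_of_lt_of_le h3 (aux_anti hnu (by omega))⟩

lemma aux_mem_T {mu nu : ℕ → ℕ} (hmu : IsPartition mu) {i j : ℕ} :
    (i, j) ∈ Tset mu nu ↔ mu i ≤ j ∧ (∀ k < i, j < mu k) ∧ nu i = j := by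
  show ptranspose mu j = i ∧ nu i = j ↔ _
  rw [aux_tr_eq hmu]
  tauto

lemma aux_T_below {mu nu : ℕ → ℕ} (hmu : IsPartition mu) (hnu : IsPartition nu)
    (i : ℕ) (h : nu (i + 1) < mu i) :
    ∃ m, i < m ∧ (m, nu m) ∈ Tset mu nu ∧ nu m < mu i := by
  obtain ⟨N1, hN1⟩ := hmu.2
  obtain ⟨N2, hN2⟩ := hnu.2
  have hexP : ∃ m, i < m ∧ mu m ≤ nu m :=
    ⟨N1 + N2 + i + 1, by omega, by rw [hN1 _ (by omega), hN2 _ (by omega)]⟩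
  obtain ⟨him, hmn⟩ := Nat.find_spec hexP
  set m := Nat.find hexP with hm
  have hlow : nu m < mu i := lt_of_le_of_lt (aux_anti hnu (by omega)) h
  refine ⟨m, him, ?_, hlow⟩
  rw [aux_mem_T hmu]
  refine ⟨hmn, fun k hk => ?_, rfl⟩
  rcases Nat.lt_or_ge i k with hik | hik
  · have hnP := Nat.find_min hexP hk
    push_neg at hnP
    have h2 := hnP hik
    exact lt_of_le_of_lt (aux_anti hnu (le_of_lt hk)) h2
  · exact lt_of_lt_of_le hlow (aux_anti hmu hik)

lemma aux_T_between {mu nu : ℕ → ℕ} (hmu : IsPartition mu) (hnu : IsPartition nu)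
    {i i' : ℕ} (hii : i < i') (hi1 : nu (i + 1) < mu i) (hi2' : mu i' ≤ nu i') :
    ∃ m, (m, nu m) ∈ Tset mu nu ∧ mu i' ≤ nu m ∧ nu m < mu i := by
  have hexP : ∃ m, i < m ∧ mu m ≤ nu m := ⟨i', hii, hi2'⟩
  obtain ⟨him, hmn⟩ := Nat.find_spec hexP
  set m := Nat.find hexP with hm
  have hmi' : m ≤ i' := Nat.find_min' hexP ⟨hii, hi2'⟩
  have hlow : nu m < mu i := lt_of_le_of_lt (aux_anti hnu (by omega)) hi1
  refine ⟨m, ?_, le_trans hi2' (aux_anti hnu hmi'), hlow⟩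
  rw [aux_mem_T hmu]
  refine ⟨hmn, fun k hk => ?_, rfl⟩
  rcases Nat.lt_or_ge i k with hik | hik
  · have hnP := Nat.find_min hexP hk
    push_neg at hnP
    exact lt_of_le_of_lt (aux_anti hnu (le_of_lt hk)) (hnP hik)
  · exact lt_of_lt_of_le hlow (aux_anti hmu hik)

lemma aux_S_between {mu nu : ℕ → ℕ} (hmu : IsPartition mu) (hnu : IsPartition nu)
    {m m' : ℕ} (hmm : m < m') (hm : mu m ≤ nu m) (hm' : ∀ k < m', nu m' < mu k) :
    ∃ i, (i, mu i - 1) ∈ Sset mu nu ∧ nu m' < mu i ∧ mu i ≤ nu m := by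
  have hw : m ≤ m' - 1 ∧ nu (m' - 1 + 1) < mu (m' - 1) := by
    have h1 := hm' (m' - 1) (by omega)
    have h2 : m' - 1 + 1 = m' := by omega
    rw [h2]
    exact ⟨by omega, h1⟩
  have hexP : ∃ l, m ≤ l ∧ nu (l + 1) < mu l := ⟨m' - 1, hw⟩
  obtain ⟨hmi, hsi⟩ := Nat.find_spec hexP
  set i := Nat.find hexP with hi
  have hii' : i ≤ m' - 1 := Nat.find_min' hexP hw
  have hmuned : mu i ≤ nu i := by
    rcases Nat.eq_or_lt_of_le hmi with he | hlt
    · rw [← he]; exact hm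
    · have hnP := Nat.find_min hexP (show i - 1 < i by omega)
      push_neg at hnP
      have h2 := hnP (by omega)
      have h3 : i - 1 + 1 = i := by omega
      rw [h3] at h2
      exact le_trans (aux_anti hmu (by omega)) h2
  have hpos : 1 ≤ mu i := by omega
  refine ⟨i, ?_, ?_, le_trans hmuned (aux_anti hnu hmi)⟩
  · rw [aux_mem_S hnu]
    refine ⟨by omega, by omega, by omega⟩
  · calc nu m' ≤ nu (i + 1) := aux_anti hnu (by omega)
      _ < mu i := hsi

lemma aux_T_coord_inj {mu nu : ℕ → ℕ} (hmu : IsPartition mu) {t t' : ℕ × ℕ}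
    (ht : t ∈ Tset mu nu) (ht' : t' ∈ Tset mu nu) (h2 : t.2 = t'.2) : t = t' := by
  obtain ⟨a, b⟩ := t
  obtain ⟨a', b'⟩ := t'
  simp only at h2
  subst h2
  rw [aux_mem_T hmu] at ht ht'
  suffices h : a = a' by rw [h]
  rcases lt_trichotomy a a' with h | h | h
  · have := ht'.2.1 a h
    omega
  · exact h
  · have := ht.2.1 a' h
    omega

section Psi
variable {mu nu : ℕ → ℕ} (hmu : IsPartition mu) (hnu : IsPartition nu)
  {t1 : ℕ × ℕ} (ht1T : t1 ∈ Tset mu nu) (ht1min : ∀ t ∈ Tset mu nu, t1.2 ≤ t.2)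
  {ψ : (ℕ × ℕ) → (ℕ × ℕ)}
  (hψ : ∀ s ∈ Sset mu nu, ψ s ∈ Tset mu nu ∧ s.2 < (ψ s).2 ∧
      ∀ t ∈ Tset mu nu, s.2 < t.2 → (ψ s).2 ≤ t.2)

include hmu hnu ht1min in
lemma aux_t1_le_s {s : ℕ × ℕ} (hs : s ∈ Sset mu nu) : t1.2 ≤ s.2 := by
  obtain ⟨a, b⟩ := s
  rw [aux_mem_S hnu] at hs
  obtain ⟨m, _, hmT, hmlt⟩ := aux_T_below hmu hnu a (by omega)
  have := ht1min _ hmT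
  simp only at this ⊢
  omega

include hmu hnu ht1min hψ in
lemma aux_psi_ne_t1 {s : ℕ × ℕ} (hs : s ∈ Sset mu nu) : ψ s ≠ t1 := by
  have h1 := aux_t1_le_s hmu hnu ht1min hs
  have h2 := (hψ s hs).2.1
  intro he
  rw [he] at h2
  omega

include hmu hnu hψ in
lemma aux_psi_lt {s s' : ℕ × ℕ} (hs : s ∈ Sset mu nu) (hs' : s' ∈ Sset mu nu)
    (h : s.1 < s'.1) : (ψ s').2 < (ψ s).2 := by
  obtain ⟨a, b⟩ := s
  obtain ⟨a', b'⟩ := s'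
  simp only at h ⊢
  have hsm := hs
  have hsm' := hs'
  rw [aux_mem_S hnu] at hsm hsm'
  obtain ⟨m, hmT, hml, hmr⟩ := aux_T_between hmu hnu h (by omega) (by omega)
  have h1 : (ψ (a', b')).2 ≤ nu m := (hψ _ hs').2.2 _ hmT (by simp; omega)
  have h2 : b < (ψ (a, b)).2 := (hψ _ hs).2.1
  omega

include hmu hnu hψ in
lemma aux_psi_inj {s s' : ℕ × ℕ} (hs : s ∈ Sset mu nu) (hs' : s' ∈ Sset mu nu)
    (h : ψ s = ψ s') : s = s' := by
  rcases lt_trichotomy s.1 s'.1 with hl | he | hl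
  · have := aux_psi_lt hmu hnu hψ hs hs' hl
    rw [h] at this; omega
  · obtain ⟨a, b⟩ := s
    obtain ⟨a', b'⟩ := s'
    simp only at he
    subst he
    rw [aux_mem_S hnu] at hs hs'
    have : b = b' := by omega
    rw [this]
  · have := aux_psi_lt hmu hnu hψ hs' hs hl
    rw [h] at this; omega

include hmu hnu ht1T ht1min hψ in
lemma aux_psi_surj {t : ℕ × ℕ} (ht : t ∈ Tset mu nu) (hne : t ≠ t1) :
    ∃ s ∈ Sset mu nu, ψ s = t := by
  classical
  obtain ⟨m, j⟩ := t
  have htm := ht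
  rw [aux_mem_T hmu] at htm
  obtain ⟨hmuj, hjall, hnuj⟩ := htm
  have ht1lt : t1.2 < j := by
    have hle := ht1min _ ht
    simp only at hle
    rcases Nat.eq_or_lt_of_le hle with he | h
    · exact absurd (aux_T_coord_inj hmu ht ht1T he.symm) hne
    · exact h
  set P : ℕ → Prop := fun c => ∃ r', (r', c) ∈ Tset mu nu with hP
  have hPt1 : P t1.2 := ⟨t1.1, by rw [Prod.mk.eta]; exact ht1T⟩
  set g := Nat.findGreatest P (j - 1) with hg
  have hPg : P g := Nat.findGreatest_spec (m := t1.2) (by omega) hPt1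
  obtain ⟨m', hm'T⟩ := hPg
  have hgle : g ≤ j - 1 := Nat.findGreatest_le _
  have hm'm := hm'T
  rw [aux_mem_T hmu] at hm'm
  have hnum' : nu m' = g := hm'm.2.2
  have hmm' : m < m' := by
    by_contra hc
    push_neg at hc
    have := aux_anti hnu hc
    omega
  obtain ⟨i, hiS, hil, hir⟩ := aux_S_between hmu hnu hmm' (by omega)
    (fun k hk => by rw [hnum']; exact hm'm.2.1 k hk)
  obtain ⟨hψT, hψgt, hψmin⟩ := hψ _ hiS
  have hle : (ψ (i, mu i - 1)).2 ≤ j := hψmin _ ht (by simp; omega)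
  have hgt : g < (ψ (i, mu i - 1)).2 := by simp only at hψgt; omega
  have heq : (ψ (i, mu i - 1)).2 = j := by
    by_contra hc
    have hlt : (ψ (i, mu i - 1)).2 ≤ j - 1 := by omega
    exact Nat.findGreatest_is_greatest hgt hlt
      ⟨(ψ (i, mu i - 1)).1, by rw [Prod.mk.eta]; exact hψT⟩
  exact ⟨(i, mu i - 1), hiS, aux_T_coord_inj hmu hψT ht heq⟩

end Psi

open Classical in
/-- The candidate result shape built from a set `B` of added cells. -/
noncomputable def kfun (mu nu : ℕ → ℕ) (B : Set (ℕ × ℕ)) : ℕ → ℕ :=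
  fun i => if (i, nu i) ∈ B then nu i + 1 else max (mu i) (nu i)

section Fwd
variable {mu nu : ℕ → ℕ} (hmu : IsPartition mu) (hnu : IsPartition nu)
  (E1 : ∀ i, nu (i + 1) ≤ mu i) (E2 : ∀ i, mu i ≤ nu i + 1)
  {B : Set (ℕ × ℕ)} (hB : B ⊆ Tset mu nu)

lemma kfun_pos {i : ℕ} (h : (i, nu i) ∈ B) : kfun mu nu B i = nu i + 1 := by
  rw [kfun, if_pos h]

lemma kfun_neg {i : ℕ} (h : (i, nu i) ∉ B) : kfun mu nu B i = max (mu i) (nu i) := by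
  rw [kfun, if_neg h]

include hmu hB in
lemma aux_B_mem {i : ℕ} (h : (i, nu i) ∈ B) :
    mu i ≤ nu i ∧ ∀ k < i, nu i < mu k := by
  have := hB h
  rw [aux_mem_T hmu] at this
  exact ⟨this.1, this.2.1⟩

include hmu hB in
lemma aux_B_shape {p : ℕ × ℕ} (h : p ∈ B) : p.2 = nu p.1 := by
  obtain ⟨a, b⟩ := p
  have := hB h
  rw [aux_mem_T hmu] at this
  exact this.2.2.symm

include hmu hnu E1 E2 hB in
lemma aux_forward :
    IsPartition (kfun mu nu B) ∧ cells (kfun mu nu B) = cells mu ∪ cells nu ∪ B ∧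
      HStrip mu (kfun mu nu B) ∧ VStrip nu (kfun mu nu B) := by
  have hge : ∀ i, max (mu i) (nu i) ≤ kfun mu nu B i := by
    intro i
    by_cases h : (i, nu i) ∈ B
    · rw [kfun_pos h]
      have := (aux_B_mem hmu hB h).1
      omega
    · rw [kfun_neg h]
  have hle : ∀ i, kfun mu nu B i ≤ nu i + 1 := by
    intro i
    by_cases h : (i, nu i) ∈ B
    · rw [kfun_pos h]
    · rw [kfun_neg h]
      have := E2 i
      omega
  have hsucc : ∀ i, kfun mu nu B (i + 1) ≤ mu i := by
    intro i
    by_cases h : (i + 1, nu (i + 1)) ∈ B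
    · rw [kfun_pos h]
      exact (aux_B_mem hmu hB h).2 i (by omega)
    · rw [kfun_neg h]
      exact max_le (hmu.1 i) (E1 i)
  have hdec : ∀ i, kfun mu nu B (i + 1) ≤ kfun mu nu B i :=
    fun i => le_trans (hsucc i) (le_trans (le_max_left _ _) (hge i))
  obtain ⟨N1, hN1⟩ := hmu.2
  obtain ⟨N2, hN2⟩ := hnu.2
  have hzero : ∀ i, N1 + N2 + 1 ≤ i → kfun mu nu B i = 0 := by
    intro i hi
    have hni : nu i = 0 := hN2 i (by omega)
    have hmi : mu i = 0 := hN1 i (by omega)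
    have hnB : (i, nu i) ∉ B := by
      intro h
      have := (aux_B_mem hmu hB h).2 N1 (by omega)
      rw [hN1 N1 le_rfl] at this
      omega
    rw [kfun_neg hnB, hmi, hni]
    simp
  refine ⟨⟨hdec, N1 + N2 + 1, hzero⟩, ?_, ?_, ?_⟩
  · ext ⟨a, b⟩
    simp only [cells, Set.mem_setOf_eq, Set.mem_union]
    by_cases h : (a, nu a) ∈ B
    · rw [kfun_pos h]
      have hmn := (aux_B_mem hmu hB h).1
      constructor
      · intro hb
        rcases Nat.lt_or_ge b (nu a) with h1 | h1
        · exact Or.inl (Or.inr h1)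
        · have : b = nu a := by omega
          subst this
          exact Or.inr h
      · rintro ((h1 | h1) | h1)
        · omega
        · omega
        · have := aux_B_shape hmu hB h1
          simp only at this
          omega
    · rw [kfun_neg h]
      constructor
      · intro hb
        rcases Nat.lt_or_ge b (mu a) with h1 | h1
        · exact Or.inl (Or.inl h1)
        · exact Or.inl (Or.inr (by omega))
      · rintro ((h1 | h1) | h1)
        · omega
        · omega
        · have h2 := aux_B_shape hmu hB h1
          simp only at h2
          subst h2
          exact absurd h1 h
  · exact fun i => ⟨le_trans (le_max_left _ _) (hge i), hsucc i⟩
  · exact fun i => ⟨le_trans (le_max_right _ _) (hge i), hle i⟩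

include hmu hB in
lemma aux_B_recover (p : ℕ × ℕ) : p ∈ B ↔ p ∈ Tset mu nu ∧ p.2 < kfun mu nu B p.1 := by
  constructor
  · intro h
    refine ⟨hB h, ?_⟩
    have hs := aux_B_shape hmu hB h
    have h2 : (p.1, nu p.1) ∈ B := by
      rw [← hs, Prod.mk.eta]; exact h
    rw [kfun_pos h2]
    omega
  · rintro ⟨hT, hlt⟩
    have hTm := hT
    rw [← Prod.mk.eta (p := p), aux_mem_T hmu] at hTm
    have hs : p.2 = nu p.1 := hTm.2.2.symm
    have hmn : mu p.1 ≤ nu p.1 := by omega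
    by_contra hc
    rw [kfun_neg (by rw [← hs, Prod.mk.eta]; exact hc)] at hlt
    omega

end Fwd

lemma aux_backward {mu nu kap : ℕ → ℕ} (hmu : IsPartition mu)
    (hH : HStrip mu kap) (hV : VStrip nu kap) (i : ℕ) :
    kap i = max (mu i) (nu i) ∨
      (kap i = nu i + 1 ∧ mu i ≤ nu i ∧ (i, nu i) ∈ Tset mu nu ∧
        max (mu i) (nu i) < kap i) := by
  have h1 : max (mu i) (nu i) ≤ kap i := max_le (hH i).1 (hV i).1
  have h2 : kap i ≤ nu i + 1 := (hV i).2
  rcases Nat.eq_or_lt_of_le h1 with he | hlt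
  · exact Or.inl he.symm
  · have hke : kap i = nu i + 1 := by omega
    have hmn : mu i ≤ nu i := by omega
    refine Or.inr ⟨hke, hmn, ?_, hlt⟩
    rw [aux_mem_T hmu]
    refine ⟨hmn, fun k hk => ?_, rfl⟩
    obtain ⟨j, rfl⟩ : ∃ j, i = j + 1 := ⟨i - 1, by omega⟩
    have h3 : kap (j + 1) ≤ mu j := (hH j).2
    have h4 : mu j ≤ mu k := aux_anti hmu (by omega)
    omega

lemma aux_lam_char {mu nu lam : ℕ → ℕ} (hnu : IsPartition nu)
    (hv : VStrip lam mu) (hh : HStrip lam nu) (i : ℕ) :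
    ((i, mu i - 1) ∈ Sset mu nu \ cells lam ∧ lam i = mu i - 1) ∨
    ((i, mu i - 1) ∉ Sset mu nu \ cells lam ∧ lam i = min (mu i) (nu i)) := by
  by_cases hm : (i, mu i - 1) ∈ Sset mu nu \ cells lam
  · left
    refine ⟨hm, ?_⟩
    have h1 : ¬ (mu i - 1 < lam i) := hm.2
    have h2 := hm.1
    rw [aux_mem_S hnu] at h2
    have h3 := (hv i).1
    have h4 := (hv i).2
    omega
  · right
    refine ⟨hm, ?_⟩
    refine le_antisymm (le_min (hv i).1 (hh i).1) ?_
    by_contra hc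
    push_neg at hc
    rw [lt_min_iff] at hc
    obtain ⟨hc1, hc2⟩ := hc
    apply hm
    have h3 := (hv i).2
    have hle : lam i = mu i - 1 := by omega
    constructor
    · rw [aux_mem_S hnu]
      have h5 := (hh i).2
      refine ⟨by omega, by omega, by omega⟩
    · show ¬ (mu i - 1 < lam i)
      omega

/-- The column-insertion shape datum for binary matrices is a bijection. -/
theorem binary_column_insertion_shape_datum_bijective (mu nu : ℕ → ℕ)
    (hmu : IsPartition mu) (hnu : IsPartition nu)
    (hex : ∃ lam0, IsPartition lam0 ∧ VStrip lam0 mu ∧ HStrip lam0 nu)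
    (t1 : ℕ × ℕ) (ht1T : t1 ∈ Tset mu nu) (ht1min : ∀ t ∈ Tset mu nu, t1.2 ≤ t.2)
    (ψ : (ℕ × ℕ) → (ℕ × ℕ))
    (hψ : ∀ s ∈ Sset mu nu, ψ s ∈ Tset mu nu ∧ s.2 < (ψ s).2 ∧
      ∀ t ∈ Tset mu nu, s.2 < t.2 → (ψ s).2 ≤ t.2) :
    (∀ lam, IsPartition lam → VStrip lam mu → HStrip lam nu → ∀ b : Bool,
      (∃! kap : ℕ → ℕ, IsPartition kap ∧
        cells kap = cells mu ∪ cells nu ∪ (ψ '' (Sset mu nu \ cells lam)) ∪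
          (if b then {t1} else (∅ : Set (ℕ × ℕ)))) ∧
      (∀ kap : ℕ → ℕ, IsPartition kap →
        cells kap = cells mu ∪ cells nu ∪ (ψ '' (Sset mu nu \ cells lam)) ∪
          (if b then {t1} else (∅ : Set (ℕ × ℕ))) →
        HStrip mu kap ∧ VStrip nu kap)) ∧
    ∃ F : ((ℕ → ℕ) × Bool) → (ℕ → ℕ),
      (∀ lam b, IsPartition lam → VStrip lam mu → HStrip lam nu →
        cells (F (lam, b)) = cells mu ∪ cells nu ∪ (ψ '' (Sset mu nu \ cells lam)) ∪
          (if b then {t1} else (∅ : Set (ℕ × ℕ)))) ∧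
      Set.BijOn F
        {p : (ℕ → ℕ) × Bool | IsPartition p.1 ∧ VStrip p.1 mu ∧ HStrip p.1 nu}
        {kap : ℕ → ℕ | IsPartition kap ∧ HStrip mu kap ∧ VStrip nu kap} := by
  classical
  obtain ⟨l0, hl0, hv0, hh0⟩ := hex
  have E1 : ∀ i, nu (i + 1) ≤ mu i := fun i => le_trans (hh0 i).2 (hv0 i).1
  have E2 : ∀ i, mu i ≤ nu i + 1 := fun i => by
    have h1 := (hv0 i).2
    have h2 := (hh0 i).1
    omega
  set A : (ℕ → ℕ) → Bool → Set (ℕ × ℕ) := fun lam b =>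
    ψ '' (Sset mu nu \ cells lam) ∪ (if b then {t1} else ∅) with hA
  have hAsub : ∀ lam b, A lam b ⊆ Tset mu nu := by
    intro lam b p hp
    rcases hp with hp | hp
    · obtain ⟨s, hs, rfl⟩ := hp
      exact (hψ s hs.1).1
    · rcases b with _ | _
      · simp at hp
      · simp only [if_true, Set.mem_singleton_iff] at hp
        rw [hp]
        exact ht1T
  have hFwd : ∀ lam b, IsPartition (kfun mu nu (A lam b)) ∧
      cells (kfun mu nu (A lam b)) = cells mu ∪ cells nu ∪ A lam b ∧
      HStrip mu (kfun mu nu (A lam b)) ∧ VStrip nu (kfun mu nu (A lam b)) :=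
    fun lam b => aux_forward hmu hnu E1 E2 (hAsub lam b)
  have hkc' : ∀ lam b, cells (kfun mu nu (A lam b)) =
      cells mu ∪ cells nu ∪ (ψ '' (Sset mu nu \ cells lam)) ∪ (if b then {t1} else ∅) := by
    intro lam b
    rw [(hFwd lam b).2.1, hA]
    exact (Set.union_assoc _ _ _).symm
  constructor
  · intro lam _ _ _ b
    obtain ⟨hkp, _, hkH, hkV⟩ := hFwd lam b
    constructor
    · refine ⟨kfun mu nu (A lam b), ⟨hkp, hkc' lam b⟩, ?_⟩
      rintro g ⟨_, hg2⟩
      exact aux_cells_inj (hg2.trans (hkc' lam b).symm)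
    · intro g _ hg2
      have he : g = kfun mu nu (A lam b) := aux_cells_inj (hg2.trans (hkc' lam b).symm)
      rw [he]
      exact ⟨hkH, hkV⟩
  · refine ⟨fun p => kfun mu nu (A p.1 p.2), fun lam b _ _ _ => hkc' lam b, ?_, ?_, ?_⟩
    · -- MapsTo
      rintro ⟨lam, b⟩ _
      obtain ⟨hkp, _, hkH, hkV⟩ := hFwd lam b
      exact ⟨hkp, hkH, hkV⟩
    · -- InjOn
      rintro ⟨lam, b⟩ hp ⟨lam', b'⟩ hp' heq
      simp only [Set.mem_setOf_eq] at hp hp'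
      have heq2 : kfun mu nu (A lam b) = kfun mu nu (A lam' b') := heq
      have hAeq : A lam b = A lam' b' := by
        ext p
        rw [aux_B_recover hmu (hAsub lam b) p, aux_B_recover hmu (hAsub lam' b') p, heq2]
      have ht1A : ∀ (l : ℕ → ℕ) (c : Bool), t1 ∈ A l c ↔ c = true := by
        intro l c
        constructor
        · intro h
          rcases h with h | h
          · obtain ⟨s, hs, he⟩ := h
            exact absurd he (aux_psi_ne_t1 hmu hnu ht1min hψ hs.1)
          · rcases c with _ | _
            · simp at h
            · rfl
        · intro h
          subst h
          exact Or.inr (by simp)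
      have hbb : b = b' := by
        have h1 := ht1A lam b
        have h2 := ht1A lam' b'
        rw [hAeq] at h1
        rw [h1] at h2
        rcases b with _ | _ <;> rcases b' with _ | _ <;> simp_all
      subst hbb
      have key : ∀ (l l' : ℕ → ℕ), A l b = A l' b →
          Sset mu nu \ cells l ⊆ Sset mu nu \ cells l' := by
        intro l l' hE s hs
        have hmem : ψ s ∈ A l' b := by
          rw [← hE]
          exact Or.inl ⟨s, hs, rfl⟩
        rcases hmem with h | h
        · obtain ⟨s', hs', he⟩ := h
          have := aux_psi_inj hmu hnu hψ hs'.1 hs.1 he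
          rw [← this]
          exact hs'
        · exfalso
          have het1 : ψ s = t1 := by
            rcases b with _ | _
            · simp at h
            · simp only [if_true, Set.mem_singleton_iff] at h
              exact h
          exact aux_psi_ne_t1 hmu hnu ht1min hψ hs.1 het1
      have hSD : Sset mu nu \ cells lam = Sset mu nu \ cells lam' :=
        le_antisymm (key _ _ hAeq) (key _ _ hAeq.symm)
      have hll : lam = lam' := by
        funext i
        rcases aux_lam_char hnu hp.2.1 hp.2.2 i with ⟨h1, h2⟩ | ⟨h1, h2⟩ <;>
          rcases aux_lam_char hnu hp'.2.1 hp'.2.2 i with ⟨h1', h2'⟩ | ⟨h1', h2'⟩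
        · rw [h2, h2']
        · rw [hSD] at h1
          exact absurd h1 h1'
        · rw [← hSD] at h1'
          exact absurd h1' h1
        · rw [h2, h2']
      rw [hll]
    · -- SurjOn
      rintro kap hkmem
      simp only [Set.mem_setOf_eq] at hkmem
      obtain ⟨hkp, hH, hV⟩ := hkmem
      set P : ℕ → Prop := fun i =>
        (i, mu i - 1) ∈ Sset mu nu ∧ (ψ (i, mu i - 1)).2 < kap ((ψ (i, mu i - 1)).1)
        with hP
      set lam : ℕ → ℕ := fun i => if P i then mu i - 1 else min (mu i) (nu i) with hlam
      set b : Bool := decide (t1.2 < kap t1.1) with hb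
      have hcases : ∀ i, (P i ∧ lam i = mu i - 1) ∨ (¬ P i ∧ lam i = min (mu i) (nu i)) := by
        intro i
        by_cases h : P i
        · exact Or.inl ⟨h, by rw [hlam]; simp only [if_pos h]⟩
        · exact Or.inr ⟨h, by rw [hlam]; simp only [if_neg h]⟩
      have hSfacts : ∀ i, P i → mu i - 1 + 1 = mu i ∧ nu (i + 1) ≤ mu i - 1 ∧ mu i - 1 < nu i := by
        intro i hpi
        have := hpi.1
        rw [aux_mem_S hnu] at this
        omega
      have hlam_le_nu1 : ∀ i, lam i ≤ nu i := by
        intro i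
        rcases hcases i with ⟨h1, h2⟩ | ⟨h1, h2⟩
        · have := hSfacts i h1
          omega
        · rw [h2]; exact min_le_right _ _
      have hlam_ge : ∀ i, nu (i + 1) ≤ lam i := by
        intro i
        rcases hcases i with ⟨h1, h2⟩ | ⟨h1, h2⟩
        · have := hSfacts i h1
          omega
        · rw [h2]
          exact le_min (E1 i) (hnu.1 i)
      have hlam_le_mu : ∀ i, lam i ≤ mu i := by
        intro i
        rcases hcases i with ⟨h1, h2⟩ | ⟨h1, h2⟩
        · omega
        · rw [h2]; exact min_le_left _ _
      have hVlam : VStrip lam mu := by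
        intro i
        refine ⟨hlam_le_mu i, ?_⟩
        rcases hcases i with ⟨h1, h2⟩ | ⟨h1, h2⟩
        · have := hSfacts i h1
          omega
        · have := E2 i
          rw [h2]
          omega
      have hHlam : HStrip lam nu := fun i => ⟨hlam_le_nu1 i, hlam_ge i⟩
      have hlamp : IsPartition lam := by
        constructor
        · intro i
          exact le_trans (le_trans (hlam_le_nu1 (i + 1)) (hlam_ge i)) le_rfl
        · obtain ⟨N1, hN1⟩ := hmu.2
          exact ⟨N1, fun i hi => by have := hlam_le_mu i; have := hN1 i hi; omega⟩
      have hmemiff : ∀ i, ((i, nu i) ∈ A lam b ↔ max (mu i) (nu i) < kap i) := by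
        intro i
        constructor
        · intro h
          rcases h with h | h
          · obtain ⟨s, hsd, he⟩ := h
            obtain ⟨a, c⟩ := s
            have hsmem := hsd.1
            have hsS := hsd.1
            rw [aux_mem_S hnu] at hsmem
            have hca : c = mu a - 1 := by omega
            subst hca
            have hnc : ¬ (mu a - 1 < lam a) := hsd.2
            have hPa : P a := by
              by_contra hnp
              rcases hcases a with ⟨h1, _⟩ | ⟨_, h2⟩
              · exact hnp h1
              · have : min (mu a) (nu a) = mu a := by omega
                omega
            have hlt : (ψ (a, mu a - 1)).2 < kap ((ψ (a, mu a - 1)).1) := hPa.2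
            rw [he] at hlt
            have hT := (hψ _ hsS).1
            rw [he, aux_mem_T hmu] at hT
            have hlt2 : nu i < kap i := hlt
            have := hT.1
            omega
          · rcases b with _ | _
            · simp at h
            · simp only [if_true, Set.mem_singleton_iff] at h
              have hbt : t1.2 < kap t1.1 := of_decide_eq_true hb.symm
              rw [← h] at hbt ht1T
              rw [aux_mem_T hmu] at ht1T
              have hbt2 : nu i < kap i := hbt
              have := ht1T.1
              omega
        · intro h
          rcases aux_backward hmu hH hV i with he | ⟨hke, hmn, hTi, _⟩
          · omega
          · by_cases hcase : (i, nu i) = t1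
            · have hbt : b = true := by
                rw [hb]
                apply decide_eq_true
                rw [← hcase]
                show nu i < kap i
                omega
              rw [hA]
              right
              rw [hbt]
              simp only [if_true, Set.mem_singleton_iff]
              exact hcase
            · obtain ⟨s, hsS, hse⟩ := aux_psi_surj hmu hnu ht1T ht1min hψ hTi hcase
              left
              refine ⟨s, ⟨hsS, ?_⟩, hse⟩
              obtain ⟨a, c⟩ := s
              have hsmem := hsS
              rw [aux_mem_S hnu] at hsmem
              have hca : c = mu a - 1 := by omega
              subst hca
              have hPa : P a := by
                refine ⟨hsS, ?_⟩
                rw [hse]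
                show nu i < kap i
                omega
              rcases hcases a with ⟨_, h2⟩ | ⟨h1, _⟩
              · show ¬ ((a, mu a - 1).2 < lam (a, mu a - 1).1)
                simp only
                omega
              · exact absurd hPa h1
      refine ⟨(lam, b), ⟨hlamp, hVlam, hHlam⟩, ?_⟩
      funext i
      show kfun mu nu (A lam b) i = kap i
      rcases aux_backward hmu hH hV i with he | ⟨hke, hmn, hTi, hlt⟩
      · rw [kfun_neg (fun hmem => by have := (hmemiff i).1 hmem; omega), he]
      · rw [kfun_pos ((hmemiff i).2 hlt), hke]
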